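/- Given a unit square Q = [0,1]² and a slab s (region between two parallel lines) of positive width with the slab directions coming from the construction, for every ε > 0 there exists ρ₀ > 0 such that for all ρ ≥ ρ₀ there exist centers c₁, c₂ ∈ ℝ² with: the intersection D(c₁,ρ) ∩ D(c₂,ρ) of the two closed disks of radius ρ is contained in s, and the area of (Q ∩ s) \ (D(c₁,ρ) ∩ D(c₂,ρ)) is less than ε. -/

import Mathlib

/-!
Put both centres on the line `ℝ u`, at heights `c + ρ` and `c + w - ρ`. Each disk then lies on
the slab side of one boundary line, so the lens lies in the slab. Conversely, by Pythagoras a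
point of norm at most `r` whose height lies in `[a + δ, a + w]` belongs to the disk of radius `ρ`
centred at height `a + ρ` as soon as `r² ≤ (2ρ - w)δ`. Hence for large `ρ` the part of `Q ∩ s`
missed by the lens lies in the two bands of half-width `δ` around the boundary lines, and the
measure of these bands inside `Q` tends to `0` with `δ` because lines are Lebesgue-null.
-/

open MeasureTheory Filter Metric Set Topology
open scoped RealInnerProductSpace ENNReal

theorem tendsto_measure_preimage_closedBall {X : Type*} [MeasurableSpace X] (μ : Measure X)
    [IsFiniteMeasure μ] {f : X → ℝ} (hf : Measurable f) {a : ℝ} (ha : μ (f ⁻¹' {a}) = 0) :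
    Tendsto (fun δ => μ (f ⁻¹' closedBall a δ)) (𝓝[>] 0) (𝓝 0) := by
  have key := tendsto_measure_biInter_gt (μ := μ) (s := fun δ => f ⁻¹' closedBall a δ) (a := 0)
    (fun δ _ => (hf measurableSet_closedBall).nullMeasurableSet)
    (fun i j _ hij => preimage_mono (closedBall_subset_closedBall hij))
    ⟨1, one_pos, measure_ne_top μ _⟩
  simp only [← preimage_iInter₂, biInter_gt_closedBall, closedBall_zero] at key
  rwa [ha] at key

theorem sq_add_sq_sub_le_sq {r δ w ρ h : ℝ} (hδ : 0 < δ) (hρ : r ^ 2 ≤ (2 * ρ - w) * δ)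
    (hlo : δ ≤ h) (hhi : h ≤ w) : r ^ 2 + (ρ - h) ^ 2 ≤ ρ ^ 2 := by
  have hw : 0 ≤ 2 * ρ - w := nonneg_of_mul_nonneg_left ((sq_nonneg r).trans hρ) hδ
  nlinarith [mul_le_mul_of_nonneg_left hlo hw, mul_le_mul_of_nonneg_right hhi (hδ.le.trans hlo)]

section
variable {E : Type*} [NormedAddCommGroup E] [InnerProductSpace ℝ E]

theorem addHaar_setOf_inner_eq [FiniteDimensional ℝ E] [MeasurableSpace E] [BorelSpace E]
    (μ : Measure E) [μ.IsAddHaarMeasure] {u : E} (hu : u ≠ 0) (a : ℝ) :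
    μ {x | ⟪x, u⟫ = a} = 0 := by
  let H : AffineSubspace ℝ E :=
    (AffineSubspace.mk' a ⊥).comap (innerSL ℝ u).toLinearMap.toAffineMap
  have hH : (H : Set E) = {x | ⟪x, u⟫ = a} := by
    ext x
    simp [H, real_inner_comm, sub_eq_zero]
  rw [← hH]
  refine Measure.addHaar_affineSubspace μ H fun htop => hu ?_
  have h (x : E) : ⟪x, u⟫ = a := by
    have hx : x ∈ (H : Set E) := by rw [htop]; trivial
    rwa [hH] at hx
  have huu := h u
  rw [← h 0, inner_zero_left] at huu
  exact inner_self_eq_zero.mp huu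

variable {u : E} (hu : ‖u‖ = 1)
include hu

theorem closedBall_smul_subset (a ρ : ℝ) : closedBall ((a + ρ) • u) ρ ⊆ {x | a ≤ ⟪x, u⟫} := by
  intro x hx
  have h : |⟪x - (a + ρ) • u, u⟫| ≤ ρ :=
    (abs_real_inner_le_norm _ _).trans (by rw [hu, mul_one, ← dist_eq_norm]; exact hx)
  rw [inner_sub_left, real_inner_smul_left, real_inner_self_eq_norm_sq, hu] at h
  show a ≤ ⟪x, u⟫
  linarith [(abs_le.mp h).1]

theorem mem_closedBall_smul_of_mem_slab {x : E} {a r δ w ρ : ℝ} (hx : ‖x‖ ≤ r) (hδ : 0 < δ)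
    (hρ : r ^ 2 ≤ (2 * ρ - w) * δ) (hlo : a + δ ≤ ⟪x, u⟫) (hhi : ⟪x, u⟫ ≤ a + w) :
    x ∈ closedBall ((a + ρ) • u) ρ := by
  have hscalar := sq_add_sq_sub_le_sq hδ hρ (h := ⟪x, u⟫ - a) (by linarith) (by linarith)
  have hdist : dist x ((a + ρ) • u) ^ 2 = ‖x‖ ^ 2 - ⟪x, u⟫ ^ 2 + (ρ - (⟪x, u⟫ - a)) ^ 2 := by
    rw [dist_eq_norm, norm_sub_sq_real, real_inner_smul_right, norm_smul, hu, Real.norm_eq_abs,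
      mul_one, sq_abs]
    ring
  have hρ₀ : 0 ≤ ρ := by nlinarith
  rw [mem_closedBall, ← pow_le_pow_iff_left₀ dist_nonneg hρ₀ two_ne_zero, hdist]
  nlinarith [norm_nonneg x, sq_nonneg ⟪x, u⟫]

theorem lens_subset_slab (c w ρ : ℝ) :
    closedBall ((c + ρ) • u) ρ ∩ closedBall ((c + w - ρ) • u) ρ ⊆
      {x | c ≤ ⟪x, u⟫ ∧ ⟪x, u⟫ ≤ c + w} := by
  have hu' : ‖-u‖ = 1 := by rwa [norm_neg]
  rw [show (c + w - ρ) • u = (-(c + w) + ρ) • -u by module]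
  rintro x ⟨h₁, h₂⟩
  have hlo : c ≤ ⟪x, u⟫ := closedBall_smul_subset hu c ρ h₁
  have hhi : -(c + w) ≤ ⟪x, -u⟫ := closedBall_smul_subset hu' _ ρ h₂
  rw [inner_neg_right] at hhi
  exact ⟨hlo, by linarith⟩

theorem slab_diff_lens_subset {c w r δ ρ : ℝ} (hδ : 0 < δ) (hρ : r ^ 2 ≤ (2 * ρ - w) * δ) :
    (closedBall 0 r ∩ {x | c ≤ ⟪x, u⟫ ∧ ⟪x, u⟫ ≤ c + w}) \
        (closedBall ((c + ρ) • u) ρ ∩ closedBall ((c + w - ρ) • u) ρ) ⊆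
      (fun x => ⟪x, u⟫) ⁻¹' closedBall c δ ∪ (fun x => ⟪x, u⟫) ⁻¹' closedBall (c + w) δ := by
  have hu' : ‖-u‖ = 1 := by rwa [norm_neg]
  rw [show (c + w - ρ) • u = (-(c + w) + ρ) • -u by module]
  rintro x ⟨⟨hx, hlo, hhi⟩, hlens⟩
  rw [mem_closedBall_zero_iff] at hx
  by_contra hband
  simp only [mem_union, mem_preimage, mem_closedBall, Real.dist_eq, not_or, not_le] at hband
  rw [abs_of_nonneg (by linarith), abs_of_nonpos (by linarith)] at hband
  refine hlens ⟨mem_closedBall_smul_of_mem_slab hu hx hδ hρ (by linarith) (by linarith),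
    mem_closedBall_smul_of_mem_slab hu' hx hδ hρ ?_ ?_⟩ <;> rw [inner_neg_right] <;> linarith

end

theorem setOf_mem_Icc_subset_closedBall :
    {x : EuclideanSpace ℝ (Fin 2) | x 0 ∈ Icc (0 : ℝ) 1 ∧ x 1 ∈ Icc (0 : ℝ) 1} ⊆
      closedBall 0 2 := by
  rintro x ⟨⟨h₀, h₀'⟩, ⟨h₁, h₁'⟩⟩
  rw [mem_closedBall_zero_iff, EuclideanSpace.norm_eq, Fin.sum_univ_two, Real.sqrt_le_iff]
  simp only [Real.norm_eq_abs, sq_abs]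
  constructor <;> nlinarith

theorem slab_approx_by_lens_general
    (u : EuclideanSpace ℝ (Fin 2)) (hu : ‖u‖ = 1) (c w : ℝ)
    (s : Set (EuclideanSpace ℝ (Fin 2)))
    (hs : s = {x | c ≤ ⟪x, u⟫ ∧ ⟪x, u⟫ ≤ c + w})
    (Q : Set (EuclideanSpace ℝ (Fin 2)))
    (hQ : Q = {x | x 0 ∈ Set.Icc (0 : ℝ) 1 ∧ x 1 ∈ Set.Icc (0 : ℝ) 1}) :
    ∀ ε > (0 : ℝ), ∃ ρ₀ > (0 : ℝ), ∀ ρ ≥ ρ₀,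
      ∃ c₁ c₂ : EuclideanSpace ℝ (Fin 2),
        Metric.closedBall c₁ ρ ∩ Metric.closedBall c₂ ρ ⊆ s ∧
        volume ((Q ∩ s) \ (Metric.closedBall c₁ ρ ∩ Metric.closedBall c₂ ρ)) <
          ENNReal.ofReal ε := by
  intro ε hε
  have hQ_ball : Q ⊆ closedBall 0 2 := hQ ▸ setOf_mem_Icc_subset_closedBall
  have : IsFiniteMeasure (volume.restrict Q) := isFiniteMeasure_restrict.mpr
    ((measure_mono hQ_ball).trans_lt measure_closedBall_lt_top).ne
  have hband (a : ℝ) := tendsto_measure_preimage_closedBall (volume.restrict Q)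
    (continuous_id.inner continuous_const : Continuous fun x => ⟪x, u⟫).measurable
    (nonpos_iff_eq_zero.mp <| (Measure.restrict_apply_le Q _).trans_eq
      (addHaar_setOf_inner_eq volume (norm_ne_zero_iff.mp (hu ▸ one_ne_zero)) a))
  have hε₂ : 0 < ENNReal.ofReal ε / 2 := ENNReal.half_pos (ENNReal.ofReal_pos.mpr hε).ne'
  obtain ⟨δ, ⟨h₁, h₂⟩, hδ⟩ := (((hband c).eventually (gt_mem_nhds hε₂)).and
    ((hband (c + w)).eventually (gt_mem_nhds hε₂)) |>.and self_mem_nhdsWithin).exists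
  refine ⟨(4 / δ + |w|) / 2, by positivity, fun ρ hρ => ⟨(c + ρ) • u, (c + w - ρ) • u,
    hs ▸ lens_subset_slab hu c w ρ, ?_⟩⟩
  have hρ' : (2 : ℝ) ^ 2 ≤ (2 * ρ - w) * δ := by
    rw [ge_iff_le, div_le_iff₀ two_pos, div_add' _ _ _ hδ.ne', div_le_iff₀ hδ] at hρ
    nlinarith [mul_le_mul_of_nonneg_right (le_abs_self w) hδ.le]
  calc _ ≤ volume.restrict Q ((fun x => ⟪x, u⟫) ⁻¹' closedBall c δ ∪
          (fun x => ⟪x, u⟫) ⁻¹' closedBall (c + w) δ) := by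
        refine (measure_mono ?_).trans (Measure.le_restrict_apply _ _)
        rintro x ⟨⟨hxQ, hxs⟩, hxL⟩
        exact ⟨slab_diff_lens_subset hu hδ hρ' ⟨⟨hQ_ball hxQ, hs ▸ hxs⟩, hxL⟩, hxQ⟩
    _ ≤ _ := measure_union_le _ _
    _ < ENNReal.ofReal ε / 2 + ENNReal.ofReal ε / 2 := ENNReal.add_lt_add h₁ h₂
    _ = ENNReal.ofReal ε := ENNReal.add_halves _

/-- A slab can be approximated by a lens inside the unit square: for any slab `s`
(region between two parallel lines, of positive width) and any `ε > 0`, there is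
`ρ₀ > 0` such that for all `ρ ≥ ρ₀` one can place two closed disks of radius `ρ`
whose intersection (lens) lies inside `s` and covers `Q ∩ s` up to area less
than `ε`, where `Q = [0,1]²`. -/
theorem slab_approx_by_lens
    (u : EuclideanSpace ℝ (Fin 2)) (hu : ‖u‖ = 1) (c w : ℝ) (hw : 0 < w)
    (s : Set (EuclideanSpace ℝ (Fin 2)))
    (hs : s = {x | c ≤ ⟪x, u⟫ ∧ ⟪x, u⟫ ≤ c + w})
    (Q : Set (EuclideanSpace ℝ (Fin 2)))
    (hQ : Q = {x | x 0 ∈ Set.Icc (0 : ℝ) 1 ∧ x 1 ∈ Set.Icc (0 : ℝ) 1}) :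
    ∀ ε > (0 : ℝ), ∃ ρ₀ > (0 : ℝ), ∀ ρ ≥ ρ₀,
      ∃ c₁ c₂ : EuclideanSpace ℝ (Fin 2),
        Metric.closedBall c₁ ρ ∩ Metric.closedBall c₂ ρ ⊆ s ∧
        volume ((Q ∩ s) \ (Metric.closedBall c₁ ρ ∩ Metric.closedBall c₂ ρ)) <
          ENNReal.ofReal ε :=
  slab_approx_by_lens_general u hu c w s hs Q hQ
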